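/- arXiv:2404.11886 — 5 statements merged into one kernel-verified Lean document; each statement's English description precedes it below -/
import Mathlib

section
/- Let d ≥ 1, let P and (P_n)_{n∈ℕ} be Borel probability measures on ℝ^d, and let F and F_n denote their multivariate distribution functions. If F_n(x) → F(x) as n → ∞ at every point x ∈ ℝ^d at which F is continuous, then P_n converges weakly to P (i.e., ∫ f dP_n → ∫ f dP for every bounded continuous f : ℝ^d → ℝ). -/
open MeasureTheory Filter Topology

namespace CDFaux

variable {d : ℕ}

def orth (x : Fin d → ℝ) : Set (Fin d → ℝ) := {y | ∀ k, y k ≤ x k}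

def box (a b : Fin d → ℝ) : Set (Fin d → ℝ) := {y | ∀ k, y k ∈ Set.Ioc (a k) (b k)}

lemma measurable_orth (x : Fin d → ℝ) : MeasurableSet (orth x) := by
  have : orth x = Set.pi Set.univ (fun k => Set.Iic (x k)) := by
    ext y; simp [orth, Set.mem_pi, Pi.le_def]
  rw [this]; exact MeasurableSet.univ_pi (fun k => measurableSet_Iic)

lemma measurable_box (a b : Fin d → ℝ) : MeasurableSet (box a b) := by
  have : box a b = Set.pi Set.univ (fun k => Set.Ioc (a k) (b k)) := by
    ext y; simp [box, Set.mem_pi]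
  rw [this]; exact MeasurableSet.univ_pi (fun k => measurableSet_Ioc)

lemma box_formula (μ : Measure (Fin d → ℝ)) [IsFiniteMeasure μ] (a b : Fin d → ℝ)
    (hab : ∀ k, a k ≤ b k) :
    (μ (box a b)).toReal = ∑ t ∈ (Finset.univ : Finset (Fin d)).powerset,
      (-1 : ℝ)^t.card * (μ (orth (fun k => if k ∈ t then a k else b k))).toReal := by
  classical
  have key : ∀ y : Fin d → ℝ, (box a b).indicator (fun _ => (1:ℝ)) y
      = ∑ t ∈ (Finset.univ : Finset (Fin d)).powerset,
          (-1:ℝ)^t.card *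
            (orth (fun k => if k ∈ t then a k else b k)).indicator (fun _ => (1:ℝ)) y := by
    intro y
    have lhs : (box a b).indicator (fun _ => (1:ℝ)) y
        = ∏ k : Fin d,
            ((-(if y k ≤ a k then (1:ℝ) else 0)) + (if y k ≤ b k then (1:ℝ) else 0)) := by
      have hfac : ∀ k : Fin d,
          (-(if y k ≤ a k then (1:ℝ) else 0)) + (if y k ≤ b k then (1:ℝ) else 0)
          = if y k ∈ Set.Ioc (a k) (b k) then (1:ℝ) else 0 := by
        intro k
        by_cases h1 : y k ≤ a k
        · have h2 : y k ≤ b k := h1.trans (hab k)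
          have h3 : y k ∉ Set.Ioc (a k) (b k) := fun hc => absurd h1 (not_le.2 hc.1)
          simp [h1, h2, h3]
        · by_cases h2 : y k ≤ b k
          · have h3 : y k ∈ Set.Ioc (a k) (b k) := ⟨not_le.1 h1, h2⟩
            simp [h1, h2, h3]
          · have h3 : y k ∉ Set.Ioc (a k) (b k) := fun hc => absurd hc.2 h2
            simp [h1, h2, h3]
      rw [Finset.prod_congr rfl (fun k _ => hfac k), Finset.prod_boole]
      simp only [Set.indicator_apply, box, Set.mem_setOf_eq, Finset.mem_univ, true_implies]
    rw [lhs, Finset.prod_add]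
    refine Finset.sum_congr rfl ?_
    intro t ht
    have hneg : (∏ k ∈ t, (-(if y k ≤ a k then (1:ℝ) else 0)))
        = (-1:ℝ)^t.card * ∏ k ∈ t, (if y k ≤ a k then (1:ℝ) else 0) := by
      rw [← Finset.prod_const, ← Finset.prod_mul_distrib]
      exact Finset.prod_congr rfl (fun k _ => (neg_one_mul _).symm)
    rw [hneg, mul_assoc]
    congr 1
    set c : Fin d → ℝ := fun k => if k ∈ t then a k else b k with hc
    have h1 : (∏ k ∈ t, (if y k ≤ a k then (1:ℝ) else 0))
        = ∏ k ∈ t, (if y k ≤ c k then (1:ℝ) else 0) :=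
      Finset.prod_congr rfl (fun k hk => by simp [hc, hk])
    have h2 : (∏ k ∈ Finset.univ \ t, (if y k ≤ b k then (1:ℝ) else 0))
        = ∏ k ∈ Finset.univ \ t, (if y k ≤ c k then (1:ℝ) else 0) :=
      Finset.prod_congr rfl (fun k hk => by
        simp only [Finset.mem_sdiff] at hk
        simp [hc, hk.2])
    rw [h1, h2, mul_comm, Finset.prod_sdiff (Finset.subset_univ t), Finset.prod_boole]
    simp only [Set.indicator_apply, orth, Set.mem_setOf_eq, Finset.mem_univ, true_implies]
  have hint : ∀ c : Fin d → ℝ,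
      ∫ y, (orth c).indicator (fun _ => (1:ℝ)) y ∂μ = (μ (orth c)).toReal := fun c =>
    integral_indicator_one (measurable_orth c)
  have hintegrable : ∀ c : Fin d → ℝ,
      Integrable ((orth c).indicator (fun _ => (1:ℝ))) μ :=
    fun c => (integrable_const (1:ℝ)).indicator (measurable_orth c)
  calc (μ (box a b)).toReal
      = ∫ y, (box a b).indicator (fun _ => (1:ℝ)) y ∂μ :=
        (integral_indicator_one (measurable_box a b)).symm
    _ = ∫ y, ∑ t ∈ (Finset.univ : Finset (Fin d)).powerset,
          (-1:ℝ)^t.card *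
            (orth (fun k => if k ∈ t then a k else b k)).indicator (fun _ => (1:ℝ)) y ∂μ := by
        exact integral_congr_ae (Eventually.of_forall key)
    _ = ∑ t ∈ (Finset.univ : Finset (Fin d)).powerset,
          ∫ y, (-1:ℝ)^t.card *
            (orth (fun k => if k ∈ t then a k else b k)).indicator (fun _ => (1:ℝ)) y ∂μ := by
        exact integral_finset_sum _ (fun t _ => (hintegrable _).const_mul _)
    _ = ∑ t ∈ (Finset.univ : Finset (Fin d)).powerset,
          (-1 : ℝ)^t.card * (μ (orth (fun k => if k ∈ t then a k else b k))).toReal := by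
        refine Finset.sum_congr rfl (fun t _ => ?_)
        rw [integral_const_mul, hint]

lemma box_tendsto (P : Measure (Fin d → ℝ)) (Pn : ℕ → Measure (Fin d → ℝ))
    [IsProbabilityMeasure P] [∀ n, IsProbabilityMeasure (Pn n)]
    (a b : Fin d → ℝ)
    (hcorner : ∀ c : Fin d → ℝ, (∀ k, c k = a k ∨ c k = b k) →
        Tendsto (fun n => ((Pn n) (orth c)).toReal) atTop (𝓝 ((P (orth c)).toReal))) :
    Tendsto (fun n => ((Pn n) (box a b)).toReal) atTop (𝓝 ((P (box a b)).toReal)) := by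
  classical
  by_cases hab : ∀ k, a k ≤ b k
  · have hf : (fun n => ((Pn n) (box a b)).toReal)
        = fun n => ∑ t ∈ (Finset.univ : Finset (Fin d)).powerset,
            (-1 : ℝ)^t.card * ((Pn n) (orth (fun k => if k ∈ t then a k else b k))).toReal :=
      funext fun n => box_formula (Pn n) a b hab
    rw [hf, box_formula P a b hab]
    refine tendsto_finset_sum _ (fun t _ => ?_)
    exact (hcorner _ (fun k => by by_cases h : k ∈ t <;> simp [h])).const_mul _
  · push_neg at hab
    obtain ⟨k, hk⟩ := hab
    have hempty : box a b = ∅ := by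
      ext y
      simp only [box, Set.mem_setOf_eq, Set.mem_empty_iff_false, iff_false]
      intro h
      have := h k
      exact absurd (this.1.trans_le this.2) (not_lt.2 hk.le)
    simp only [hempty, measure_empty, ENNReal.toReal_zero]
    exact tendsto_const_nhds

lemma cont_at_good (P : Measure (Fin d → ℝ)) [IsProbabilityMeasure P]
    (F : (Fin d → ℝ) → ℝ) (hF : ∀ x, F x = (P (orth x)).toReal)
    (x : Fin d → ℝ) (hx : ∀ k, P {y : Fin d → ℝ | y k = x k} = 0) :
    ContinuousAt F x := by
  classical
  set u : ℕ → Fin d → ℝ := fun m k => x k + 1/(m+1) with hu_def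
  set l : ℕ → Fin d → ℝ := fun m k => x k - 1/(m+1) with hl_def
  have hpos : ∀ m : ℕ, (0:ℝ) < 1/(m+1) := fun m => by positivity
  have hmono_inv : ∀ m m' : ℕ, m ≤ m' → 1/((m':ℝ)+1) ≤ 1/((m:ℝ)+1) := fun m m' h =>
    one_div_le_one_div_of_le (by positivity) (by linarith [(Nat.cast_le (α := ℝ)).2 h])
  have hInter : ⋂ m, orth (u m) = orth x := by
    ext y
    simp only [Set.mem_iInter, orth, Set.mem_setOf_eq]
    constructor
    · intro h k
      by_contra hc
      push_neg at hc
      obtain ⟨m, hm⟩ := exists_nat_one_div_lt (sub_pos.2 hc)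
      have h2 := h m k
      simp only [hu_def] at h2
      linarith
    · intro h m k
      have h1 := h k
      have h2 := (hpos m).le
      simp only [hu_def]
      linarith
  have h_up : Tendsto (fun m => P (orth (u m))) atTop (𝓝 (P (orth x))) := by
    rw [← hInter]
    refine tendsto_measure_iInter_atTop (fun m => (measurable_orth _).nullMeasurableSet)
      ?_ ⟨0, measure_ne_top _ _⟩
    intro m m' h y hy k
    have h1 := hy k
    have h2 := hmono_inv m m' h
    simp only [hu_def] at h1 ⊢
    linarith
  have hUnion : ⋃ m, orth (l m) = {y : Fin d → ℝ | ∀ k, y k < x k} := by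
    ext y
    simp only [Set.mem_iUnion, orth, Set.mem_setOf_eq]
    constructor
    · rintro ⟨m, hm⟩ k
      have h1 := hm k
      have h2 := hpos m
      simp only [hl_def] at h1
      linarith
    · intro h
      have hchoice : ∀ k, ∃ m : ℕ, 1/((m:ℝ)+1) < x k - y k :=
        fun k => exists_nat_one_div_lt (sub_pos.2 (h k))
      choose mk hmk using hchoice
      refine ⟨Finset.univ.sup mk, fun k => ?_⟩
      have h1 : 1/(((Finset.univ.sup mk : ℕ) : ℝ)+1) ≤ 1/((mk k : ℝ)+1) :=
        hmono_inv _ _ (Finset.le_sup (Finset.mem_univ k))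
      have h2 := hmk k
      simp only [hl_def]
      linarith
  have h_low : Tendsto (fun m => P (orth (l m))) atTop (𝓝 (P (orth x))) := by
    have hmono : Monotone (fun m => orth (l m)) := by
      intro m m' h y hy k
      have h1 := hy k
      have h2 := hmono_inv m m' h
      simp only [hl_def] at h1 ⊢
      linarith
    have ht := tendsto_measure_iUnion_atTop (μ := P) hmono
    rw [hUnion] at ht
    have hle : P (orth x) ≤ P {y : Fin d → ℝ | ∀ k, y k < x k} := by
      have hsub : orth x ⊆ {y : Fin d → ℝ | ∀ k, y k < x k}
          ∪ (⋃ k, {y : Fin d → ℝ | y k = x k}) := by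
        intro y hy
        by_cases hall : ∀ k, y k < x k
        · exact Or.inl hall
        · push_neg at hall
          obtain ⟨k, hk⟩ := hall
          exact Or.inr (Set.mem_iUnion.2 ⟨k, le_antisymm (hy k) hk⟩)
      calc P (orth x) ≤ P ({y : Fin d → ℝ | ∀ k, y k < x k})
              + P (⋃ k, {y : Fin d → ℝ | y k = x k}) :=
            le_trans (measure_mono hsub) (measure_union_le _ _)
        _ = P {y : Fin d → ℝ | ∀ k, y k < x k} := by
            rw [measure_iUnion_null (fun k => hx k), add_zero]
    have heq : P {y : Fin d → ℝ | ∀ k, y k < x k} = P (orth x) :=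
      le_antisymm (measure_mono (fun y hy k => (hy k).le)) hle
    rwa [heq] at ht
  have hu_real : Tendsto (fun m => (P (orth (u m))).toReal) atTop (𝓝 ((P (orth x)).toReal)) :=
    (ENNReal.tendsto_toReal (measure_ne_top _ _)).comp h_up
  have hl_real : Tendsto (fun m => (P (orth (l m))).toReal) atTop (𝓝 ((P (orth x)).toReal)) :=
    (ENNReal.tendsto_toReal (measure_ne_top _ _)).comp h_low
  rw [Metric.continuousAt_iff]
  intro ε hε
  have h1 := hu_real.eventually_lt_const
    (show (P (orth x)).toReal < (P (orth x)).toReal + ε/2 by linarith)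
  have h2 := hl_real.eventually_const_lt
    (show (P (orth x)).toReal - ε/2 < (P (orth x)).toReal by linarith)
  obtain ⟨m, hm1, hm2⟩ := (h1.and h2).exists
  refine ⟨1/(m+1), hpos m, ?_⟩
  intro x' hx'
  have hcoord : ∀ k, |x' k - x k| < 1/(m+1) := by
    intro k
    have hd := dist_le_pi_dist x' x k
    rw [Real.dist_eq] at hd
    linarith
  have mono_toReal : ∀ {s t : Set (Fin d → ℝ)}, s ⊆ t → (P s).toReal ≤ (P t).toReal :=
    fun h => ENNReal.toReal_mono (measure_ne_top _ _) (measure_mono h)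
  have hsub1 : orth x' ⊆ orth (u m) := by
    intro y hy k
    have h3 := hy k
    have h4 := (abs_lt.1 (hcoord k)).2
    simp only [hu_def]
    linarith
  have hsub2 : orth (l m) ⊆ orth x' := by
    intro y hy k
    have h3 := hy k
    have h4 := (abs_lt.1 (hcoord k)).1
    simp only [hl_def] at h3
    linarith
  have hb1 : (P (orth x')).toReal ≤ (P (orth (u m))).toReal := mono_toReal hsub1
  have hb2 : (P (orth (l m))).toReal ≤ (P (orth x')).toReal := mono_toReal hsub2
  rw [Real.dist_eq, hF x', hF x, abs_sub_lt_iff]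
  constructor <;> linarith

lemma union_tendsto (P : Measure (Fin d → ℝ)) (Pn : ℕ → Measure (Fin d → ℝ))
    [IsProbabilityMeasure P] [∀ n, IsProbabilityMeasure (Pn n)]
    (D : Set ℝ) (hDmax : ∀ {s t : ℝ}, s ∈ D → t ∈ D → max s t ∈ D)
    (hDmin : ∀ {s t : ℝ}, s ∈ D → t ∈ D → min s t ∈ D)
    (hbox : ∀ a b : Fin d → ℝ, (∀ k, a k ∈ D) → (∀ k, b k ∈ D) →
      Tendsto (fun n => ((Pn n) (box a b)).toReal) atTop (𝓝 ((P (box a b)).toReal))) :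
    ∀ (s : Finset ℕ) (A B : ℕ → Fin d → ℝ),
      (∀ i ∈ s, ∀ k, A i k ∈ D) → (∀ i ∈ s, ∀ k, B i k ∈ D) →
      Tendsto (fun n => ((Pn n) (⋃ i ∈ s, box (A i) (B i))).toReal) atTop
        (𝓝 ((P (⋃ i ∈ s, box (A i) (B i))).toReal)) := by
  classical
  intro s
  induction s using Finset.induction_on with
  | empty =>
    intro A B _ _
    simp only [Finset.notMem_empty, Set.iUnion_of_empty, Set.iUnion_empty, measure_empty,
      ENNReal.toReal_zero]
    exact tendsto_const_nhds
  | @insert j s hj ih =>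
    intro A B hA hB
    have hU : (⋃ i ∈ insert j s, box (A i) (B i))
        = box (A j) (B j) ∪ ⋃ i ∈ s, box (A i) (B i) := by
      simp [Set.biUnion_insert]
    have hI : box (A j) (B j) ∩ (⋃ i ∈ s, box (A i) (B i))
        = ⋃ i ∈ s, box (fun k => max (A j k) (A i k)) (fun k => min (B j k) (B i k)) := by
      rw [Set.inter_iUnion₂]
      refine Set.iUnion₂_congr fun i hi => ?_
      ext y
      simp only [Set.mem_inter_iff, box, Set.mem_setOf_eq, Set.mem_Ioc]
      constructor
      · rintro ⟨h1, h2⟩ k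
        exact ⟨max_lt (h1 k).1 (h2 k).1, le_min (h1 k).2 (h2 k).2⟩
      · intro h
        exact ⟨fun k => ⟨lt_of_le_of_lt (le_max_left _ _) (h k).1,
            (h k).2.trans (min_le_left _ _)⟩,
          fun k => ⟨lt_of_le_of_lt (le_max_right _ _) (h k).1,
            (h k).2.trans (min_le_right _ _)⟩⟩
    have key : ∀ (μ : Measure (Fin d → ℝ)) [IsFiniteMeasure μ],
        (μ (⋃ i ∈ insert j s, box (A i) (B i))).toReal
          = (μ (box (A j) (B j))).toReal + (μ (⋃ i ∈ s, box (A i) (B i))).toReal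
            - (μ (box (A j) (B j) ∩ (⋃ i ∈ s, box (A i) (B i)))).toReal := by
      intro μ _
      have hmeas : MeasurableSet (⋃ i ∈ s, box (A i) (B i)) :=
        MeasurableSet.biUnion s.countable_toSet (fun i _ => measurable_box _ _)
      have h := measure_union_add_inter (μ := μ) (box (A j) (B j)) hmeas
      have h' := congrArg ENNReal.toReal h
      rw [ENNReal.toReal_add (measure_ne_top _ _) (measure_ne_top _ _),
        ENNReal.toReal_add (measure_ne_top _ _) (measure_ne_top _ _)] at h'
      rw [hU]
      linarith
    have t1 : Tendsto (fun n => ((Pn n) (box (A j) (B j))).toReal) atTop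
        (𝓝 ((P (box (A j) (B j))).toReal)) :=
      hbox _ _ (hA j (Finset.mem_insert_self j s)) (hB j (Finset.mem_insert_self j s))
    have t2 := ih A B (fun i hi => hA i (Finset.mem_insert_of_mem hi))
      (fun i hi => hB i (Finset.mem_insert_of_mem hi))
    have t3 : Tendsto (fun n => ((Pn n) (box (A j) (B j) ∩ ⋃ i ∈ s, box (A i) (B i))).toReal)
        atTop (𝓝 ((P (box (A j) (B j) ∩ ⋃ i ∈ s, box (A i) (B i))).toReal)) := by
      rw [hI]
      exact ih (fun i k => max (A j k) (A i k)) (fun i k => min (B j k) (B i k))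
        (fun i hi k => hDmax (hA j (Finset.mem_insert_self j s) k)
          (hA i (Finset.mem_insert_of_mem hi) k))
        (fun i hi k => hDmin (hB j (Finset.mem_insert_self j s) k)
          (hB i (Finset.mem_insert_of_mem hi) k))
    have hfun : (fun n => ((Pn n) (⋃ i ∈ insert j s, box (A i) (B i))).toReal)
        = fun n => (((Pn n) (box (A j) (B j))).toReal
            + ((Pn n) (⋃ i ∈ s, box (A i) (B i))).toReal
            - ((Pn n) (box (A j) (B j) ∩ ⋃ i ∈ s, box (A i) (B i))).toReal) :=
      funext fun n => key (Pn n)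
    rw [hfun, key P]
    exact (t1.add t2).sub t3

end CDFaux

open CDFaux in
theorem stmt_0 (d : ℕ) (hd : 1 ≤ d)
    (P : Measure (Fin d → ℝ)) (Pn : ℕ → Measure (Fin d → ℝ))
    [IsProbabilityMeasure P] [∀ n, IsProbabilityMeasure (Pn n)]
    (F : (Fin d → ℝ) → ℝ) (Fseq : ℕ → (Fin d → ℝ) → ℝ)
    (hF : ∀ x, F x = (P {y | ∀ k, y k ≤ x k}).toReal)
    (hFn : ∀ n x, Fseq n x = (Pn n {y | ∀ k, y k ≤ x k}).toReal)
    (hconv : ∀ x, ContinuousAt F x → Tendsto (fun n => Fseq n x) atTop (𝓝 (F x))) :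
    ∀ f : BoundedContinuousFunction (Fin d → ℝ) ℝ,
      Tendsto (fun n => ∫ y, f y ∂(Pn n)) atTop (𝓝 (∫ y, f y ∂P)) := by
  classical
  -- good set
  set Dg : Set ℝ := {t | ∀ k, P {y : Fin d → ℝ | y k = t} = 0} with hDg
  have hDgc : Set.Countable Dgᶜ := by
    have hcompl : Dgᶜ = ⋃ k, {t : ℝ | P {y : Fin d → ℝ | y k = t} ≠ 0} := by
      ext t
      simp [hDg]
    rw [hcompl]
    refine Set.countable_iUnion fun k => ?_
    have hlev := Measure.countable_meas_level_set_pos (μ := P)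
      (g := fun y : Fin d → ℝ => y k) (measurable_pi_apply k)
    refine Set.Countable.mono ?_ hlev
    intro t ht
    simp only [Set.mem_setOf_eq] at ht ⊢
    exact pos_iff_ne_zero.2 ht
  have hDdense : Dense Dg := by
    have := hDgc.dense_compl ℝ
    rwa [compl_compl] at this
  obtain ⟨T, hTsub, hTc, hTd⟩ := hDdense.exists_countable_dense_subset
  -- continuity of F at good points
  have hF' : ∀ x, F x = (P (orth x)).toReal := hF
  have hcontF : ∀ x : Fin d → ℝ, (∀ k, x k ∈ Dg) → ContinuousAt F x :=
    fun x hx => cont_at_good P F hF' x (fun k => hx k k)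
  -- corner convergence
  have hcornerD : ∀ c : Fin d → ℝ, (∀ k, c k ∈ Dg) →
      Tendsto (fun n => ((Pn n) (orth c)).toReal) atTop (𝓝 ((P (orth c)).toReal)) := by
    intro c hc
    have h := hconv c (hcontF c hc)
    simp only [hF, hFn] at h
    exact h
  have hDmax : ∀ {s t : ℝ}, s ∈ Dg → t ∈ Dg → max s t ∈ Dg := by
    intro s t hs ht
    rcases max_choice s t with h | h <;> rw [h] <;> assumption
  have hDmin : ∀ {s t : ℝ}, s ∈ Dg → t ∈ Dg → min s t ∈ Dg := by
    intro s t hs ht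
    rcases min_choice s t with h | h <;> rw [h] <;> assumption
  have hboxD : ∀ a b : Fin d → ℝ, (∀ k, a k ∈ Dg) → (∀ k, b k ∈ Dg) →
      Tendsto (fun n => ((Pn n) (box a b)).toReal) atTop (𝓝 ((P (box a b)).toReal)) := by
    intro a b ha hb
    refine box_tendsto P Pn a b (fun c hc => hcornerD c (fun k => ?_))
    rcases hc k with h | h <;> rw [h]
    exacts [ha k, hb k]
  have hUnionTendsto := union_tendsto P Pn Dg hDmax hDmin hboxD
  -- reduce to ProbabilityMeasure convergence
  set μ : ProbabilityMeasure (Fin d → ℝ) := ⟨P, inferInstance⟩ with hμ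
  set μs : ℕ → ProbabilityMeasure (Fin d → ℝ) := fun n => ⟨Pn n, inferInstance⟩ with hμs
  intro f
  suffices h : Tendsto μs atTop (𝓝 μ) by
    exact ProbabilityMeasure.tendsto_iff_forall_integral_tendsto.mp h f
  apply tendsto_of_forall_isOpen_le_liminf
  intro G hG
  -- the key ENNReal inequality
  have hENN : P G ≤ atTop.liminf (fun n => Pn n G) := by
    set Q : Set ((Fin d → ℝ) × (Fin d → ℝ)) :=
      {p | (∀ k, p.1 k ∈ T) ∧ (∀ k, p.2 k ∈ T) ∧
        {y : Fin d → ℝ | ∀ k, y k ∈ Set.Icc (p.1 k) (p.2 k)} ⊆ G} with hQdef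
    have hGcover : G ⊆ ⋃ p ∈ Q, box p.1 p.2 := by
      intro x hx
      obtain ⟨ε, hε, hball⟩ := Metric.isOpen_iff.1 hG x hx
      have hex_a : ∀ k, ∃ t ∈ T, t ∈ Set.Ioo (x k - ε) (x k) :=
        fun k => hTd.exists_between (by linarith)
      have hex_b : ∀ k, ∃ t ∈ T, t ∈ Set.Ioo (x k) (x k + ε) :=
        fun k => hTd.exists_between (by linarith)
      choose a haT haI using hex_a
      choose b hbT hbI using hex_b
      have hQmem : (a, b) ∈ Q := by
        refine ⟨haT, hbT, ?_⟩
        intro y hy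
        apply hball
        rw [Metric.mem_ball, dist_pi_lt_iff hε]
        intro k
        have h1 := (hy k).1
        have h2 := (hy k).2
        have h3 := (haI k).1
        have h4 := (hbI k).2
        rw [Real.dist_eq, abs_sub_lt_iff]
        constructor <;> linarith
      exact Set.mem_biUnion hQmem (fun k => ⟨(haI k).2, (hbI k).1.le⟩)
    have hQc : Q.Countable := by
      have hfc : {g : Fin d → ℝ | ∀ k, g k ∈ T}.Countable :=
        Set.countable_pi (fun _ => hTc)
      refine Set.Countable.mono ?_ (hfc.prod hfc)
      intro p hp
      exact ⟨hp.1, hp.2.1⟩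
    rcases Set.eq_empty_or_nonempty Q with hQe | hQne
    · have hGe : G = ∅ := by
        have h := hGcover
        rw [hQe] at h
        simpa using Set.subset_empty_iff.1 (by simpa using h)
      simp [hGe]
    · obtain ⟨e, he⟩ := hQc.exists_eq_range hQne
      have heQ : ∀ m, e m ∈ Q := fun m => by rw [he]; exact Set.mem_range_self m
      set U : ℕ → Set (Fin d → ℝ) :=
        fun m => ⋃ i ∈ Finset.range m, box (e i).1 (e i).2 with hUdef
      have hUm : Monotone U := by
        intro m m' h y hy
        simp only [hUdef, Set.mem_iUnion, Finset.mem_range] at hy ⊢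
        obtain ⟨i, hi, hyi⟩ := hy
        exact ⟨i, lt_of_lt_of_le hi h, hyi⟩
      have hUG : ⋃ m, U m = G := by
        apply subset_antisymm
        · refine Set.iUnion_subset fun m => Set.iUnion₂_subset fun i _ => ?_
          refine subset_trans ?_ (heQ i).2.2
          intro y hy k
          exact ⟨(hy k).1.le, (hy k).2⟩
        · intro x hx
          obtain ⟨p, hpQ, hpx⟩ := Set.mem_iUnion₂.1 (hGcover hx)
          rw [he] at hpQ
          obtain ⟨i, rfl⟩ := hpQ
          refine Set.mem_iUnion.2 ⟨i+1, ?_⟩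
          exact Set.mem_biUnion (Finset.mem_range.2 (lt_add_one i)) hpx
      have hPU : Tendsto (fun m => P (U m)) atTop (𝓝 (P G)) := by
        have ht := tendsto_measure_iUnion_atTop (μ := P) hUm
        rwa [hUG] at ht
      have hUten : ∀ m, Tendsto (fun n => Pn n (U m)) atTop (𝓝 (P (U m))) := by
        intro m
        have hreal := hUnionTendsto (Finset.range m) (fun i => (e i).1) (fun i => (e i).2)
          (fun i _ k => hTsub ((heQ i).1 k)) (fun i _ k => hTsub ((heQ i).2.1 k))
        have h2 : Tendsto (fun n => ENNReal.ofReal ((Pn n (U m)).toReal)) atTop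
            (𝓝 (ENNReal.ofReal ((P (U m)).toReal))) :=
          (ENNReal.continuous_ofReal.tendsto _).comp hreal
        simpa only [ENNReal.ofReal_toReal (measure_ne_top _ _)] using h2
      have hle : ∀ m, P (U m) ≤ atTop.liminf (fun n => Pn n G) := by
        intro m
        rw [← (hUten m).liminf_eq]
        refine liminf_le_liminf (Eventually.of_forall fun n => measure_mono ?_)
        rw [← hUG]
        exact Set.subset_iUnion U m
      exact le_of_tendsto' hPU hle
  -- convert to ℝ≥0 statement
  have aux : (ENNReal.ofNNReal (atTop.liminf fun i => μs i G))
      = atTop.liminf (fun i => ENNReal.ofNNReal (μs i G)) := by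
    refine Monotone.map_liminf_of_continuousAt (F := atTop) ENNReal.coe_mono
      (fun i => μs i G) ENNReal.continuous_coe.continuousAt ?_ ⟨0, by simp⟩
    exact IsBoundedUnder.isCoboundedUnder_ge ⟨1, by simp⟩
  have hcoe : ENNReal.ofNNReal (μ G) ≤ ENNReal.ofNNReal (atTop.liminf fun i => μs i G) := by
    rw [aux]
    have h1 : ENNReal.ofNNReal (μ G) = P G := by
      rw [ProbabilityMeasure.ennreal_coeFn_eq_coeFn_toMeasure]; rfl
    have h2 : (fun i => ENNReal.ofNNReal (μs i G)) = fun n => Pn n G := by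
      funext n
      rw [ProbabilityMeasure.ennreal_coeFn_eq_coeFn_toMeasure]; rfl
    rw [h1, h2]
    exact hENN
  exact_mod_cast hcoe
end

section
/- Let d ≥ 1, let F : ℝ^d → ℝ, and let (F_n)_{n∈ℕ} be a sequence of functions ℝ^d → ℝ each of which is nondecreasing with respect to the componentwise partial order (i.e., F_n(x) ≤ F_n(y) whenever x_k ≤ y_k for all k). If F_n → F Lebesgue-almost everywhere on ℝ^d, then F_n(x) → F(x) at every point x at which F is continuous. -/
/-!
Let `S` be the conull set where `Fₙ → F`. Since Lebesgue measure charges every nonempty open set,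
`S` meets every open box, so arbitrarily close to `x` there are points `y ≤ x ≤ z` of `S`.
Monotonicity gives `Fₙ y ≤ Fₙ x ≤ Fₙ z`, the outer terms tend to `F y` and `F z`, and these are
close to `F x` by continuity.
-/

open MeasureTheory Filter Topology Set

theorem tendsto_apply_of_monotone_of_continuousAt {α β ι : Type*} [TopologicalSpace α]
    [Preorder α] [TopologicalSpace β] [LinearOrder β] [OrderTopology β] {l : Filter ι}
    {f : ι → α → β} {F : α → β} {x : α} (hf : ∀ n, Monotone (f n)) (hF : ContinuousAt F x)
    (hbelow : ∃ᶠ y in 𝓝 x, y ≤ x ∧ Tendsto (f · y) l (𝓝 (F y)))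
    (habove : ∃ᶠ z in 𝓝 x, x ≤ z ∧ Tendsto (f · z) l (𝓝 (F z))) :
    Tendsto (f · x) l (𝓝 (F x)) := by
  refine tendsto_order.2 ⟨fun a ha => ?_, fun b hb => ?_⟩
  · obtain ⟨y, ⟨hyx, hy⟩, hay⟩ :=
      (hbelow.and_eventually (hF.eventually (eventually_gt_nhds ha))).exists
    exact (hy.eventually (eventually_gt_nhds hay)).mono fun n hn => hn.trans_le (hf n hyx)
  · obtain ⟨z, ⟨hxz, hz⟩, hzb⟩ :=
      (habove.and_eventually (hF.eventually (eventually_lt_nhds hb))).exists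
    exact (hz.eventually (eventually_lt_nhds hzb)).mono fun n hn => (hf n hxz).trans_lt hn

theorem frequently_mem_and_of_ae_of_mem_closure {X : Type*} [TopologicalSpace X]
    [MeasurableSpace X] {μ : Measure X} [μ.IsOpenPosMeasure] {p : X → Prop}
    (hp : ∀ᵐ y ∂μ, p y) {U : Set X} (hU : IsOpen U) {x : X} (hx : x ∈ closure U) :
    ∃ᶠ y in 𝓝 x, y ∈ U ∧ p y :=
  mem_closure_iff_frequently.1 <|
    closure_minimal ((μ.dense_of_ae hp).open_subset_closure_inter hU) isClosed_closure hx

section Pi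

variable {ι β : Type*} [Finite ι] [TopologicalSpace β] [LinearOrder β] [OrderTopology β]
  [DenselyOrdered β] [MeasurableSpace (ι → β)] {μ : Measure (ι → β)} [μ.IsOpenPosMeasure]
  {p : (ι → β) → Prop}

theorem frequently_le_and_of_ae [NoMinOrder β] (hp : ∀ᵐ y ∂μ, p y) (x : ι → β) :
    ∃ᶠ y in 𝓝 x, y ≤ x ∧ p y := by
  have hx : x ∈ closure (pi univ fun i => Iio (x i)) := by
    simp only [closure_pi_set, closure_Iio, Set.mem_pi, mem_Iic, le_refl, implies_true]
  refine (frequently_mem_and_of_ae_of_mem_closure hp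
    (isOpen_set_pi finite_univ fun i _ => isOpen_Iio) hx).mono fun y hy => ?_
  exact ⟨fun i => (hy.1 i (mem_univ i)).le, hy.2⟩

theorem frequently_ge_and_of_ae [NoMaxOrder β] (hp : ∀ᵐ y ∂μ, p y) (x : ι → β) :
    ∃ᶠ z in 𝓝 x, x ≤ z ∧ p z := by
  have hx : x ∈ closure (pi univ fun i => Ioi (x i)) := by
    simp only [closure_pi_set, closure_Ioi, Set.mem_pi, mem_Ici, le_refl, implies_true]
  refine (frequently_mem_and_of_ae_of_mem_closure hp
    (isOpen_set_pi finite_univ fun i _ => isOpen_Ioi) hx).mono fun z hz => ?_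
  exact ⟨fun i => (hz.1 i (mem_univ i)).le, hz.2⟩

end Pi

theorem stmt_1_general (d : ℕ)
    (F : (Fin d → ℝ) → ℝ) (Fseq : ℕ → (Fin d → ℝ) → ℝ)
    (hmono : ∀ n, Monotone (Fseq n))
    (hae : ∀ᵐ x ∂(volume : Measure (Fin d → ℝ)),
      Tendsto (fun n => Fseq n x) atTop (𝓝 (F x))) :
    ∀ x : Fin d → ℝ, ContinuousAt F x →
      Tendsto (fun n => Fseq n x) atTop (𝓝 (F x)) := fun x hF =>
  tendsto_apply_of_monotone_of_continuousAt hmono hF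
    (frequently_le_and_of_ae hae x) (frequently_ge_and_of_ae hae x)

theorem stmt_1 (d : ℕ) (hd : 1 ≤ d)
    (F : (Fin d → ℝ) → ℝ) (Fseq : ℕ → (Fin d → ℝ) → ℝ)
    (hmono : ∀ n, Monotone (Fseq n))
    (hae : ∀ᵐ x ∂(volume : Measure (Fin d → ℝ)),
      Tendsto (fun n => Fseq n x) atTop (𝓝 (F x))) :
    ∀ x : Fin d → ℝ, ContinuousAt F x →
      Tendsto (fun n => Fseq n x) atTop (𝓝 (F x)) :=
  stmt_1_general d F Fseq hmono hae
end

section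
/- Let (Λ, 𝓑_Λ) and (𝓓, 𝓑_𝓓) be measurable spaces, Q : Λ → 𝓓 measurable, P_init a probability measure on Λ, P_pred the pushforward of P_init under Q, and P_obs a probability measure on 𝓓 that is absolutely continuous with respect to P_pred, with Radon–Nikodym derivative r = dP_obs/dP_pred. Define the updated measure P_update on Λ by P_update(A) = ∫_A r(Q(λ)) dP_init(λ) for A ∈ 𝓑_Λ. Then P_update is a probability measure on Λ and its pushforward under Q equals P_obs; in particular P_update(Q⁻¹(B)) = P_obs(B) for every B ∈ 𝓑_𝓓, i.e., P_update is a data-consistent (pullback) solution. -/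
open MeasureTheory
open scoped ENNReal

theorem apply_preimage_eq_of_setLIntegral_comp {Λ D : Type*} [MeasurableSpace Λ]
    [MeasurableSpace D] {Q : Λ → D} (hQ : Measurable Q) {μ : Measure Λ} {ν : Measure D}
    {ρ : Measure Λ} {r : D → ℝ≥0∞} (hr : Measurable r)
    (hν : ∀ B : Set D, MeasurableSet B → ν B = ∫⁻ y in B, r y ∂(μ.map Q))
    (hρ : ∀ A : Set Λ, MeasurableSet A → ρ A = ∫⁻ l in A, r (Q l) ∂μ)
    {B : Set D} (hB : MeasurableSet B) : ρ (Q ⁻¹' B) = ν B := by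
  rw [hρ _ (hQ hB), hν B hB, setLIntegral_map hB hr hQ]

theorem stmt_3_general {Λ D : Type*} [MeasurableSpace Λ] [MeasurableSpace D]
    (Q : Λ → D) (hQ : Measurable Q)
    (Pinit : Measure Λ)
    (Pobs : Measure D) [IsProbabilityMeasure Pobs]
    (r : D → ℝ≥0∞) (hr : Measurable r)
    (hRN : ∀ B : Set D, MeasurableSet B → Pobs B = ∫⁻ y in B, r y ∂(Pinit.map Q))
    (Pupdate : Measure Λ)
    (hPu : ∀ A : Set Λ, MeasurableSet A → Pupdate A = ∫⁻ l in A, r (Q l) ∂Pinit) :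
    IsProbabilityMeasure Pupdate ∧ Pupdate.map Q = Pobs ∧
      ∀ B : Set D, MeasurableSet B → Pupdate (Q ⁻¹' B) = Pobs B := by
  have consistent : ∀ B : Set D, MeasurableSet B → Pupdate (Q ⁻¹' B) = Pobs B :=
    fun _ hB => apply_preimage_eq_of_setLIntegral_comp hQ hr hRN hPu hB
  have map_eq : Pupdate.map Q = Pobs := by
    ext B hB
    rw [Measure.map_apply hQ hB, consistent B hB]
  refine ⟨⟨?_⟩, map_eq, consistent⟩
  simpa using consistent Set.univ MeasurableSet.univ

theorem stmt_3 {Λ D : Type*} [MeasurableSpace Λ] [MeasurableSpace D]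
    (Q : Λ → D) (hQ : Measurable Q)
    (Pinit : Measure Λ) [IsProbabilityMeasure Pinit]
    (Pobs : Measure D) [IsProbabilityMeasure Pobs]
    (r : D → ℝ≥0∞) (hr : Measurable r)
    (hRN : ∀ B : Set D, MeasurableSet B → Pobs B = ∫⁻ y in B, r y ∂(Pinit.map Q))
    (Pupdate : Measure Λ)
    (hPu : ∀ A : Set Λ, MeasurableSet A → Pupdate A = ∫⁻ l in A, r (Q l) ∂Pinit) :
    IsProbabilityMeasure Pupdate ∧ Pupdate.map Q = Pobs ∧
      ∀ B : Set D, MeasurableSet B → Pupdate (Q ⁻¹' B) = Pobs B :=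
  stmt_3_general Q hQ Pinit Pobs r hr hRN Pupdate hPu
end

section
/- Let q^1, …, q^ℓ be pairwise distinct points of [0,1)^d and define H_{ij} = (1/ℓ²) ∏_{k=1}^d (1 − max(q^i_k, q^j_k)). Then H is symmetric positive definite (wᵀHw > 0 for all nonzero w ∈ ℝ^ℓ), and consequently, for any b ∈ ℝ^ℓ, the quadratic function w ↦ wᵀHw − bᵀw attains a unique minimizer over the nonempty compact convex feasible set {w ∈ ℝ^ℓ : w_i ≥ 0 for all i, (1/ℓ)∑_{i=1}^ℓ w_i = 1}. -/
open MeasureTheory Set Filter Topology Matrix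
open scoped Pointwise

/-!
The entry `H i j` is `ℓ⁻²` times the Lebesgue measure of `[q^i, 1] ∩ [q^j, 1]`, so
`wᵀ H w = ℓ⁻² ∫ (∑ᵢ wᵢ 𝟙[q^i, 1])²`. Pick `j` in the support of `w` with `q^j` minimal for `⪯`
there. Just above `q^j` a point lies in `[q^i, 1]` exactly when `q^i ⪯ q^j`, so the integrand
equals `w_j²` on a nonempty open set and the integral is positive. Positive definiteness makes
the objective strictly convex, and a continuous strictly convex function has exactly one
minimizer on the compact convex set `ℓ • stdSimplex`.
-/

theorem sq_sum_mul_indicator_one {α ι : Type*} [Fintype ι] (s : ι → Set α) (w : ι → ℝ) (x : α) :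
    (∑ i, w i * (s i).indicator 1 x) ^ 2 =
      ∑ i, ∑ j, w i * w j * (s i ∩ s j).indicator 1 x := by
  simp only [sq, Finset.sum_mul_sum, Set.inter_indicator_one, Pi.mul_apply]
  exact Finset.sum_congr rfl fun i _ => Finset.sum_congr rfl fun j _ => by ring

section Gram

variable {α ι : Type*} [MeasurableSpace α] {μ : Measure α} {s : ι → Set α}

theorem integrable_mul_indicator_one_inter (hs : ∀ i, MeasurableSet (s i))
    (hμs : ∀ i, μ (s i) ≠ ⊤) (c : ℝ) (i j : ι) :
    Integrable (fun x => c * (s i ∩ s j).indicator 1 x) μ :=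
  ((integrable_indicator_iff ((hs i).inter (hs j))).2
    (integrableOn_const (measure_ne_top_of_subset inter_subset_left (hμs i)))).const_mul c

theorem integrable_sq_sum_mul_indicator_one [Fintype ι] (hs : ∀ i, MeasurableSet (s i))
    (hμs : ∀ i, μ (s i) ≠ ⊤) (w : ι → ℝ) :
    Integrable (fun x => (∑ i, w i * (s i).indicator 1 x) ^ 2) μ := by
  simp only [sq_sum_mul_indicator_one]
  exact integrable_finsetSum _ fun i _ => integrable_finsetSum _ fun j _ =>
    integrable_mul_indicator_one_inter hs hμs _ i j

theorem dotProduct_mulVec_measureReal_inter [Fintype ι] (hs : ∀ i, MeasurableSet (s i))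
    (hμs : ∀ i, μ (s i) ≠ ⊤) (w : ι → ℝ) :
    w ⬝ᵥ (Matrix.of fun i j => μ.real (s i ∩ s j)) *ᵥ w =
      ∫ x, (∑ i, w i * (s i).indicator 1 x) ^ 2 ∂μ := by
  simp only [sq_sum_mul_indicator_one]
  rw [integral_finsetSum _ fun i _ => integrable_finsetSum _ fun j _ =>
    integrable_mul_indicator_one_inter hs hμs _ i j]
  simp only [dotProduct, mulVec, Matrix.of_apply, Finset.mul_sum]
  refine Finset.sum_congr rfl fun i _ => ?_
  rw [integral_finsetSum _ fun j _ => integrable_mul_indicator_one_inter hs hμs _ i j]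
  refine Finset.sum_congr rfl fun j _ => ?_
  rw [integral_const_mul, integral_indicator_one ((hs i).inter (hs j))]
  ring

end Gram

section Orthants

variable {ι κ : Type*} [Fintype κ]

theorem measureReal_Icc_inter_Icc_one {a b : κ → ℝ} (ha : a ≤ 1) (hb : b ≤ 1) :
    volume.real (Icc a 1 ∩ Icc b 1) = ∏ k, (1 - max (a k) (b k)) := by
  rw [Icc_inter_Icc, inf_idem, measureReal_def, Real.volume_Icc_pi_toReal (sup_le ha hb)]
  rfl

theorem exists_isOpen_forall_mem_Icc_one_iff [Finite ι] (q : ι → κ → ℝ) (j : ι)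
    (hj : ∀ k, q j k < 1) :
    ∃ U : Set (κ → ℝ), IsOpen U ∧ U.Nonempty ∧ ∀ x ∈ U, ∀ i, x ∈ Icc (q i) 1 ↔ q i ≤ q j := by
  have hev : ∀ k, ∀ᶠ y in 𝓝[>] (q j k), y < 1 ∧ ∀ i, q j k < q i k → y < q i k :=
    fun k => nhdsWithin_le_nhds <| (eventually_lt_nhds (hj k)).and <| eventually_all.2 fun i => by
      by_cases h : q j k < q i k
      · exact (eventually_lt_nhds h).mono fun _ hy _ => hy
      · exact .of_forall fun _ h' => absurd h' h
  choose c hc hcU using fun k => mem_nhdsGT_iff_exists_Ioo_subset.1 (hev k)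
  refine ⟨univ.pi fun k => Ioo (q j k) (c k), isOpen_set_pi finite_univ fun k _ => isOpen_Ioo,
    univ_pi_nonempty_iff.2 fun k => nonempty_Ioo.2 (hc k), fun x hx i => ?_⟩
  have hxk k : q j k < x k ∧ x k < 1 ∧ ∀ i, q j k < q i k → x k < q i k :=
    ⟨(hx k trivial).1, hcU k (hx k trivial)⟩
  constructor
  · rintro ⟨hix, -⟩ k
    by_contra! h
    exact (hix k).not_gt ((hxk k).2.2 i h)
  · exact fun hij => ⟨fun k => (hij k).trans (hxk k).1.le, fun k => (hxk k).2.1.le⟩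

theorem integral_sq_sum_mul_indicator_Icc_one_pos [Fintype ι] {q : ι → κ → ℝ}
    (hq : ∀ i k, q i k < 1) (hinj : Function.Injective q) {w : ι → ℝ} (hw : w ≠ 0) :
    0 < ∫ x, (∑ i, w i * (Icc (q i) 1).indicator 1 x) ^ 2 := by
  obtain ⟨j, hj, hjmin⟩ := (toFinite (Function.support w)).exists_minimalFor q _
    (Function.support_nonempty_iff.2 hw)
  obtain ⟨U, hUo, hUne, hU⟩ := exists_isOpen_forall_mem_Icc_one_iff q j (hq j)
  have hF : ∀ x ∈ U, ∑ i, w i * (Icc (q i) 1).indicator 1 x = w j := by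
    intro x hx
    rw [Finset.sum_eq_single j]
    · simp [indicator_of_mem ((hU x hx j).2 le_rfl)]
    · intro i _ hij
      by_cases hwi : w i = 0
      · simp [hwi]
      rw [indicator_of_notMem, mul_zero]
      rw [hU x hx i]
      exact fun hle => hij (hinj (le_antisymm hle (hjmin hwi hle)))
    · simp
  rw [integral_pos_iff_support_of_nonneg (fun x => sq_nonneg _)
    (integrable_sq_sum_mul_indicator_one (fun i => measurableSet_Icc)
      (fun i => isCompact_Icc.measure_lt_top.ne) w)]
  calc 0 < volume U := hUo.measure_pos volume hUne
    _ ≤ _ := measure_mono fun x hx => by simpa [hF x hx] using hj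

end Orthants

theorem strictConvexOn_dotProduct_mulVec_sub {ι : Type*} [Fintype ι] (A : Matrix ι ι ℝ)
    (hA : ∀ v, v ≠ 0 → 0 < v ⬝ᵥ A *ᵥ v) (b : ι → ℝ) :
    StrictConvexOn ℝ univ fun v => v ⬝ᵥ A *ᵥ v - b ⬝ᵥ v := by
  refine ⟨convex_univ, fun x _ y _ hxy a c ha hc hac => ?_⟩
  have hQ := hA (x - y) (sub_ne_zero.2 hxy)
  simp only [mulVec_add, mulVec_smul, mulVec_sub, dotProduct_add, dotProduct_smul,
    add_dotProduct, smul_dotProduct, dotProduct_sub, sub_dotProduct, smul_eq_mul] at hQ ⊢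
  -- `f (a • x + c • y) = a * f x + c * f y - a * c * Q (x - y)` once `c = 1 - a`
  have hac' : c = 1 - a := by linarith
  subst hac'
  nlinarith [mul_pos ha hc]

theorem IsCompact.existsUnique_isMinOn_of_strictConvexOn {E : Type*} [TopologicalSpace E]
    [AddCommGroup E] [Module ℝ E] {K : Set E} {f : E → ℝ} (hK : IsCompact K) (hne : K.Nonempty)
    (hf : ContinuousOn f K) (hconv : StrictConvexOn ℝ K f) : ∃! w, w ∈ K ∧ IsMinOn f K w := by
  obtain ⟨w, hw, hmin⟩ := hK.exists_isMinOn hne hf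
  exact ⟨w, ⟨hw, hmin⟩, fun v ⟨hv, hvmin⟩ => hconv.eq_of_isMinOn hvmin hmin hv hw⟩

theorem setOf_nonneg_and_one_div_mul_sum_eq_one {ι : Type*} [Fintype ι] {c : ℝ} (hc : 0 < c) :
    {v : ι → ℝ | (∀ i, 0 ≤ v i) ∧ (1 / c) * ∑ i, v i = 1} = c • stdSimplex ℝ ι := by
  ext v
  rw [mem_smul_set_iff_inv_smul_mem₀ hc.ne']
  simp [stdSimplex, Finset.mul_sum, mul_nonneg_iff_of_pos_left (inv_pos.2 hc)]

theorem stmt_7 (d l : ℕ) (hl : 0 < l) (q : Fin l → Fin d → ℝ)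
    (hq : ∀ i k, q i k ∈ Set.Ico (0:ℝ) 1)
    (hinj : Function.Injective q)
    (H : Matrix (Fin l) (Fin l) ℝ)
    (hH : ∀ i j, H i j = (1 / (l:ℝ)^2) * ∏ k, (1 - max (q i k) (q j k))) :
    H.IsSymm ∧ (∀ w : Fin l → ℝ, w ≠ 0 → 0 < dotProduct w (H.mulVec w)) ∧
      ∀ b : Fin l → ℝ,
        ∃! w : Fin l → ℝ,
          w ∈ {v : Fin l → ℝ | (∀ i, 0 ≤ v i) ∧ (1 / (l:ℝ)) * ∑ i, v i = 1} ∧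
          ∀ v ∈ {v : Fin l → ℝ | (∀ i, 0 ≤ v i) ∧ (1 / (l:ℝ)) * ∑ i, v i = 1},
            dotProduct w (H.mulVec w) - dotProduct b w ≤
              dotProduct v (H.mulVec v) - dotProduct b v := by
  have hq1 i k : q i k < 1 := (hq i k).2
  have hGram : H = (1 / (l:ℝ)^2) •
      Matrix.of fun i j => volume.real (Icc (q i) 1 ∩ Icc (q j) 1) := by
    ext i j
    rw [hH, Matrix.smul_apply, of_apply, smul_eq_mul,
      measureReal_Icc_inter_Icc_one (fun k => (hq1 i k).le) (fun k => (hq1 j k).le)]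
  have hpd : ∀ w : Fin l → ℝ, w ≠ 0 → 0 < w ⬝ᵥ H *ᵥ w := by
    intro w hw
    rw [hGram, smul_mulVec, dotProduct_smul, smul_eq_mul,
      dotProduct_mulVec_measureReal_inter (fun i => measurableSet_Icc)
        (fun i => isCompact_Icc.measure_lt_top.ne)]
    exact mul_pos (by positivity) (integral_sq_sum_mul_indicator_Icc_one_pos hq1 hinj hw)
  refine ⟨IsSymm.ext fun i j => by simp only [hH, max_comm], hpd, fun b => ?_⟩
  rw [setOf_nonneg_and_one_div_mul_sum_eq_one (Nat.cast_pos.2 hl)]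
  simpa only [isMinOn_iff] using
    ((isCompact_stdSimplex ℝ (Fin l)).smul (l:ℝ)).existsUnique_isMinOn_of_strictConvexOn
    (Nonempty.smul_set ⟨_, single_mem_stdSimplex ℝ ⟨0, hl⟩⟩)
    (by fun_prop : Continuous _).continuousOn
    ((strictConvexOn_dotProduct_mulVec_sub H hpd b).subset (subset_univ _)
      ((convex_stdSimplex ℝ (Fin l)).smul _))
end

section
/- Let (Λ, 𝓑_Λ) and (𝓓, 𝓑_𝓓) be measurable spaces, Q : Λ → 𝓓 measurable, μ a probability measure on Λ, and let (κ_q)_{q∈𝓓} be a Markov kernel from 𝓓 to Λ that disintegrates μ over Q, i.e., μ(A) = ∫_𝓓 κ_q(A) d(Q_*μ)(q) for all A ∈ 𝓑_Λ, and κ_q(Λ ∖ Q⁻¹({q})) = 0 for Q_*μ-almost every q (assuming singletons {q} are measurable). Let g : 𝓓 → [0,∞) be measurable with ∫_Λ g(Q(λ)) dμ(λ) = 1, and define the probability measure ν(A) = ∫_A g(Q(λ)) dμ(λ). Then Q_*ν has density g with respect to Q_*μ, and the same kernel disintegrates ν over Q: ν(A) = ∫_𝓓 κ_q(A) d(Q_*ν)(q)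 for all A ∈ 𝓑_Λ. In other words, the updated measure has the same family of conditional probability measures on the fibers of Q as the initial measure. -/
/-!
Since `μ = ∫ κ_q d(Q_*μ)(q)` and `κ_q` lives on the fiber `Q⁻¹{q}`, the fiber-constant density
`g ∘ Q` equals the constant `g q` `κ_q`-almost everywhere. Hence reweighting `μ` by `g ∘ Q` is the
same as reweighting the mixing measure `Q_*μ` by `g` and keeping the kernel; pushing forward by `Q`
identifies that reweighted mixing measure with `Q_*ν`.
-/

open MeasureTheory ProbabilityTheory
open scoped ENNReal

namespace MeasureTheory

variable {Λ D : Type*} [MeasurableSpace Λ] {Q : Λ → D}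

theorem setLIntegral_comp_eq_mul_of_compl_fiber_null {ρ : Measure Λ} {q : D}
    (hρ : ρ (Q ⁻¹' {q})ᶜ = 0) (f : D → ℝ≥0∞) (A : Set Λ) :
    ∫⁻ x in A, f (Q x) ∂ρ = f q * ρ A := by
  have hQ_eq : ∀ᵐ x ∂ρ, Q x = q := measure_mono_null (fun x hx => by simpa using hx) hρ
  calc ∫⁻ x in A, f (Q x) ∂ρ = ∫⁻ _ in A, f q ∂ρ :=
        lintegral_congr_ae <| (ae_restrict_of_ae hQ_eq).mono fun x hx => congrArg f hx
    _ = f q * ρ A := by rw [setLIntegral_const]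

variable [MeasurableSpace D]

theorem Measure.map_withDensity_comp (hQ : Measurable Q) (μ : Measure Λ) {g : D → ℝ≥0∞}
    (hg : Measurable g) : (μ.withDensity (g ∘ Q)).map Q = (μ.map Q).withDensity g := by
  ext B hB
  rw [Measure.map_apply hQ hB, withDensity_apply _ (hQ hB), withDensity_apply _ hB,
    setLIntegral_map hB hg hQ]
  rfl

theorem Measure.withDensity_comp_eq_bind_withDensity (hQ : Measurable Q) {μ : Measure Λ}
    {κ : Kernel D Λ} (hdis : μ = (μ.map Q).bind κ)
    (hfib : ∀ᵐ q ∂(μ.map Q), κ q (Q ⁻¹' {q})ᶜ = 0) {g : D → ℝ≥0∞} (hg : Measurable g) :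
    μ.withDensity (g ∘ Q) = ((μ.map Q).withDensity g).bind κ := by
  ext A hA
  calc μ.withDensity (g ∘ Q) A = ∫⁻ x, A.indicator (g ∘ Q) x ∂μ := by
        rw [withDensity_apply _ hA, lintegral_indicator hA]
    _ = ∫⁻ q, ∫⁻ x, A.indicator (g ∘ Q) x ∂(κ q) ∂(μ.map Q) := by
        conv_lhs => rw [hdis]
        exact Measure.lintegral_bind κ.aemeasurable ((hg.comp hQ).indicator hA).aemeasurable
    _ = ∫⁻ q, g q * κ q A ∂(μ.map Q) := by
        refine lintegral_congr_ae (hfib.mono fun q hq => ?_)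
        exact (lintegral_indicator hA _).trans
          (setLIntegral_comp_eq_mul_of_compl_fiber_null hq g A)
    _ = ((μ.map Q).withDensity g).bind κ A := by
        rw [Measure.bind_apply hA κ.aemeasurable,
          lintegral_withDensity_eq_lintegral_mul _ hg (κ.measurable_coe hA)]
        rfl

end MeasureTheory

theorem stmt_12_general {Λ D : Type*} [MeasurableSpace Λ] [MeasurableSpace D]
    (Q : Λ → D) (hQ : Measurable Q)
    (μ : Measure Λ)
    (κ : Kernel D Λ)
    (hdis : ∀ A : Set Λ, MeasurableSet A → μ A = ∫⁻ q, κ q A ∂(μ.map Q))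
    (hfib : ∀ᵐ q ∂(μ.map Q), κ q ((Q ⁻¹' {q})ᶜ) = 0)
    (g : D → ℝ≥0∞) (hg : Measurable g)
    (ν : Measure Λ) (hν : ∀ A : Set Λ, MeasurableSet A → ν A = ∫⁻ x in A, g (Q x) ∂μ) :
    ν.map Q = (μ.map Q).withDensity g ∧
      ∀ A : Set Λ, MeasurableSet A → ν A = ∫⁻ q, κ q A ∂(ν.map Q) := by
  have hν_eq : ν = μ.withDensity (g ∘ Q) :=
    Measure.ext fun A hA => by rw [hν A hA, withDensity_apply _ hA]; rfl
  have hbind : μ = (μ.map Q).bind κ :=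
    Measure.ext fun A hA => by rw [hdis A hA, Measure.bind_apply hA κ.aemeasurable]
  have hmap : ν.map Q = (μ.map Q).withDensity g := hν_eq ▸ Measure.map_withDensity_comp hQ μ hg
  refine ⟨hmap, fun A hA => ?_⟩
  rw [hmap, ← Measure.bind_apply hA κ.aemeasurable,
    ← Measure.withDensity_comp_eq_bind_withDensity hQ hbind hfib hg, hν_eq]

theorem stmt_12 {Λ D : Type*} [MeasurableSpace Λ] [MeasurableSpace D]
    [MeasurableSingletonClass D]
    (Q : Λ → D) (hQ : Measurable Q)
    (μ : Measure Λ) [IsProbabilityMeasure μ]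
    (κ : Kernel D Λ) [IsMarkovKernel κ]
    (hdis : ∀ A : Set Λ, MeasurableSet A → μ A = ∫⁻ q, κ q A ∂(μ.map Q))
    (hfib : ∀ᵐ q ∂(μ.map Q), κ q ((Q ⁻¹' {q})ᶜ) = 0)
    (g : D → ℝ≥0∞) (hg : Measurable g)
    (hint : ∫⁻ x, g (Q x) ∂μ = 1)
    (ν : Measure Λ) (hν : ∀ A : Set Λ, MeasurableSet A → ν A = ∫⁻ x in A, g (Q x) ∂μ) :
    ν.map Q = (μ.map Q).withDensity g ∧
      ∀ A : Set Λ, MeasurableSet A → ν A = ∫⁻ q, κ q A ∂(ν.map Q) :=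
  stmt_12_general Q hQ μ κ hdis hfib g hg ν hν
end
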